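/- arXiv:1403.6064 — 2 statements merged into one kernel-verified Lean document; each statement's English description precedes it below -/
import Mathlib

section
/- Let $p \geq 2$, $1 \leq s < p^*$, and $\beta = \frac{p+s-ps}{ps}$. For every $n \geq 2$, the weak $\ell_s$ norm of the finite sequence $(e_j/j^\beta)_{j=1}^n$ in $\ell_p^n$ satisfies $\sup_{\varphi \in B_{(\ell_p^n)^*}} \left(\sum_{j=1}^n |\varphi(e_j/j^\beta)|^s\right)^{1/s} < (1+\log n)^\beta$. -/
/-!
Since `β = 1/s - 1/q`, the exponents `q`, `1/β`, `s` form a Hölder triple. Hölder's inequality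
bounds the `ℓ_s` norm of `(φ_j (j+1)^(-β))_j` by `‖φ‖_q` times the `ℓ_{1/β}` norm of the weights
`(j+1)^(-β)`, which is `H_n^β` for the harmonic number `H_n`; and `H_n < 1 + log n` for `n ≥ 2`.
-/

open Real

theorem harmonic_lt_one_add_log {n : ℕ} (hn : 2 ≤ n) : (harmonic n : ℝ) < 1 + log n := by
  obtain ⟨m, rfl⟩ : ∃ m, n = m + 1 := ⟨n - 1, by omega⟩
  have hm : (0 : ℝ) < m := by norm_cast; omega
  have hlog : log ((m : ℝ) / (m + 1)) < (m : ℝ) / (m + 1) - 1 :=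
    log_lt_sub_one_of_pos (by positivity)
      (by rw [ne_eq, div_eq_one_iff_eq (by positivity)]; linarith)
  rw [log_div hm.ne' (by positivity), div_sub_one (by positivity)] at hlog
  have hHm := harmonic_le_one_add_log m
  have hinv : ((m : ℝ) + 1)⁻¹ = -((m - (m + 1)) / (m + 1)) := by field_simp; ring
  push_cast [harmonic_succ]
  linarith

theorem Real.Lr_le_Lp_mul_Lq_of_nonneg {ι : Type*} (t : Finset ι) {f g : ι → ℝ} {p q r : ℝ}
    (hpqr : p.HolderTriple q r) (hf : ∀ i ∈ t, 0 ≤ f i) (hg : ∀ i ∈ t, 0 ≤ g i) :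
    (∑ i ∈ t, (f i * g i) ^ r) ^ (1 / r) ≤
      (∑ i ∈ t, f i ^ p) ^ (1 / p) * (∑ i ∈ t, g i ^ q) ^ (1 / q) := by
  obtain ⟨hp, hq, hr⟩ := hpqr.all_pos
  have hF : 0 ≤ ∑ i ∈ t, f i ^ p := Finset.sum_nonneg fun i hi => rpow_nonneg (hf i hi) p
  have hG : 0 ≤ ∑ i ∈ t, g i ^ q := Finset.sum_nonneg fun i hi => rpow_nonneg (hg i hi) q
  calc (∑ i ∈ t, (f i * g i) ^ r) ^ (1 / r)
      ≤ ((∑ i ∈ t, f i ^ p) ^ (r / p) * (∑ i ∈ t, g i ^ q) ^ (r / q)) ^ (1 / r) := by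
        gcongr
        · exact Finset.sum_nonneg fun i hi => rpow_nonneg (mul_nonneg (hf i hi) (hg i hi)) r
        · exact Lr_rpow_le_Lp_mul_Lq_of_nonneg t hpqr hf hg
    _ = (∑ i ∈ t, f i ^ p) ^ (1 / p) * (∑ i ∈ t, g i ^ q) ^ (1 / q) := by
        rw [mul_rpow (by positivity) (by positivity), ← rpow_mul hF, ← rpow_mul hG]
        congr 2 <;> field_simp

lemma harmonic_eq_sum_fin (n : ℕ) : (harmonic n : ℝ) = ∑ j : Fin n, ((j : ℝ) + 1)⁻¹ := by
  push_cast [harmonic]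
  exact (Fin.sum_univ_eq_sum_range (fun i => ((i : ℝ) + 1)⁻¹) n).symm

theorem stmt1_general (p q s β : ℝ) (n : ℕ) (hq : 1 / p + 1 / q = 1)
    (hs1 : 1 ≤ s) (hs2 : s < q) (hβ : β = (p + s - p * s) / (p * s)) (hn : 2 ≤ n) :
    sSup {t : ℝ | ∃ φ : Fin n → ℝ, (∑ j, |φ j| ^ q) ^ (1 / q) ≤ 1 ∧
        t = (∑ j, (|φ j| * ((j : ℝ) + 1) ^ (-β)) ^ s) ^ (1 / s)} <
      (1 + Real.log n) ^ β := by
  have hp : p ≠ 0 := by rintro rfl; norm_num at hq; linarith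
  have hβq : β = s⁻¹ - q⁻¹ := by
    have hq' : q⁻¹ = 1 - p⁻¹ := by simp only [one_div] at hq; linarith
    rw [hβ, hq']; field_simp; ring
  have hβ0 : 0 < β := by rw [hβq, sub_pos]; exact inv_strictAnti₀ (by linarith) hs2
  have hHolder : q.HolderTriple β⁻¹ s := ⟨by rw [inv_inv, hβq]; ring, by linarith, by positivity⟩
  have hH : (0 : ℝ) ≤ harmonic n := by exact_mod_cast (harmonic_pos (by omega)).le
  refine (Real.sSup_le ?_ (by positivity)).trans_lt
    (Real.rpow_lt_rpow hH (harmonic_lt_one_add_log hn) hβ0)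
  rintro t ⟨φ, hφ, rfl⟩
  have hweight (j : Fin n) : (((j : ℝ) + 1) ^ (-β)) ^ β⁻¹ = ((j : ℝ) + 1)⁻¹ := by
    rw [← Real.rpow_mul (by positivity), neg_mul, mul_inv_cancel₀ hβ0.ne', Real.rpow_neg_one]
  calc (∑ j, (|φ j| * ((j : ℝ) + 1) ^ (-β)) ^ s) ^ (1 / s)
      ≤ (∑ j, |φ j| ^ q) ^ (1 / q) * (∑ j : Fin n, (((j : ℝ) + 1) ^ (-β)) ^ β⁻¹) ^ (1 / β⁻¹) :=
        Real.Lr_le_Lp_mul_Lq_of_nonneg _ hHolder (fun j _ => abs_nonneg _)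
          (fun j _ => by positivity)
    _ ≤ 1 * (harmonic n : ℝ) ^ β := by
        rw [Finset.sum_congr rfl fun j _ => hweight j, ← harmonic_eq_sum_fin, one_div β⁻¹, inv_inv]
        gcongr
    _ = (harmonic n : ℝ) ^ β := one_mul _

/-- Let `p ≥ 2`, `1 ≤ s < p*` (with `q = p*` the conjugate exponent of `p`),
`β = (p+s-ps)/(ps)`, and `n ≥ 2`. Identifying the dual of `ℓ_p^n` with
`ℓ_{p*}^n`, the weak `ℓ_s` norm of the sequence `(e_j/j^β)_{j=1}^n` in `ℓ_p^n`,
namely `sup { (∑_{j=1}^n (|φ_j|/j^β)^s)^{1/s} : ‖φ‖_{p*} ≤ 1 }`, is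
`< (1 + log n)^β`. -/
theorem stmt1 (p q s β : ℝ) (n : ℕ) (hp : 2 ≤ p) (hq : 1 / p + 1 / q = 1)
    (hs1 : 1 ≤ s) (hs2 : s < q) (hβ : β = (p + s - p * s) / (p * s)) (hn : 2 ≤ n) :
    sSup {t : ℝ | ∃ φ : Fin n → ℝ, (∑ j, |φ j| ^ q) ^ (1 / q) ≤ 1 ∧
        t = (∑ j, (|φ j| * ((j : ℝ) + 1) ^ (-β)) ^ s) ^ (1 / s)} <
      (1 + Real.log n) ^ β :=
  stmt1_general p q s β n hq hs1 hs2 hβ hn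
end

section
/- Every Hamel basis of the Banach space $\mathcal{L}(^m\ell_p;\mathbb{K})$ ($1 \leq p < \infty$, $m \geq 1$) has cardinality exactly $\mathfrak{c}$, the cardinality of the continuum. -/
open scoped ENNReal
open Cardinal TopologicalSpace

/-!
Since `ℓ_p` is separable for `p < ∞`, a continuous form on `ℓ_p^m` is determined by its values
on a countable dense set, so there are at most `𝔠 ^ ℵ₀ = 𝔠` of them. Conversely, the forms
`Mₖ x = ∏ᵢ (xᵢ)ₖ` have norm at most `1` and satisfy `Mₖ (eₙ, …, eₙ) = δₖₙ`, so for `0 < t < 1` the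
series `∑ₖ tᵏ Mₖ` converges to a form taking the value `tⁿ` at `(eₙ, …, eₙ)`; geometric sequences
with distinct ratios are linearly independent, giving `𝔠` independent forms.
-/

universe u

theorem Cardinal.mk_le_power_aleph0_of_injective_continuous {F Y Z : Type u}
    [TopologicalSpace Y] [SeparableSpace Y] [TopologicalSpace Z] [T2Space Z] [Nonempty Z]
    (φ : F → Y → Z) (hφ : Function.Injective φ) (hcont : ∀ f, Continuous (φ f)) :
    #F ≤ #Z ^ ℵ₀ := by
  obtain ⟨D, hDc, hDd⟩ := exists_countable_dense Y
  have hres : Function.Injective fun f => D.domRestrict (φ f) := fun f g hfg =>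
    hφ <| (hcont f).ext_on hDd (hcont g) fun y hy => congrFun hfg ⟨y, hy⟩
  calc #F ≤ #(D → Z) := mk_le_of_injective hres
    _ = #Z ^ #D := (power_def Z D).symm
    _ ≤ #Z ^ ℵ₀ := power_le_power_left (mk_ne_zero Z) hDc.le_aleph0

theorem rank_continuousMultilinearMap_le_continuum {ι : Type} [Countable ι] {E : ι → Type}
    [∀ i, AddCommGroup (E i)] [∀ i, Module ℝ (E i)] [∀ i, TopologicalSpace (E i)]
    [∀ i, SeparableSpace (E i)] :
    Module.rank ℝ (ContinuousMultilinearMap ℝ E ℝ) ≤ 𝔠 :=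
  calc Module.rank ℝ (ContinuousMultilinearMap ℝ E ℝ)
      ≤ #(ContinuousMultilinearMap ℝ E ℝ) := rank_le_card _ _
    _ ≤ #ℝ ^ ℵ₀ := mk_le_power_aleph0_of_injective_continuous (fun f => ⇑f)
        DFunLike.coe_injective fun f => f.cont
    _ = 𝔠 := by rw [mk_real, continuum_power_aleph0]

namespace lp

theorem separableSpace {α : Type*} [Countable α] {E : α → Type*} {p : ℝ≥0∞} [Fact (1 ≤ p)]
    [∀ i, NormedAddCommGroup (E i)] [∀ i, SeparableSpace (E i)] (hp : p ≠ ⊤) :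
    SeparableSpace (lp E p) := by
  classical
  set S : Set (lp E p) := ⋃ i, Set.range (lp.single p i)
  have hS : IsSeparable (Submodule.span ℕ S : Set (lp E p)) := IsSeparable.span <|
    .iUnion fun i => isSeparable_range (lp.singleContinuousAddMonoidHom E p i).continuous
  refine isSeparable_univ_iff.1 (hS.closure.mono fun x _ => ?_)
  refine mem_closure_of_tendsto (lp.hasSum_single hp x) (.of_forall fun s => ?_)
  exact Submodule.sum_mem _ fun i _ => Submodule.subset_span (Set.mem_iUnion_of_mem i ⟨_, rfl⟩)

end lp

theorem continuum_le_rank_of_biorthogonal {F : Type*} [NormedAddCommGroup F] [NormedSpace ℝ F]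
    [CompleteSpace F] {C : ℝ} (v : ℕ → F) (hv : ∀ k, ‖v k‖ ≤ C) (φ : ℕ → F →L[ℝ] ℝ)
    (hφ : ∀ n k, φ n (v k) = if k = n then 1 else 0) : 𝔠 ≤ Module.rank ℝ F := by
  have hsum (t : Set.Ioo (0 : ℝ) 1) : Summable fun k => (t : ℝ) ^ k • v k := by
    refine Summable.of_norm_bounded ((summable_geometric_of_lt_one t.2.1.le t.2.2).mul_right C)
      fun k => ?_
    rw [norm_smul, norm_pow, Real.norm_of_nonneg t.2.1.le]
    exact mul_le_mul_of_nonneg_left (hv k) (pow_nonneg t.2.1.le k)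
  set w : Set.Ioo (0 : ℝ) 1 → F := fun t => ∑' k, (t : ℝ) ^ k • v k
  have hgeom : LinearIndependent ℝ fun (t : Set.Ioo (0 : ℝ) 1) (n : ℕ) => (t : ℝ) ^ n := by
    have hinj : Function.Injective fun t : Set.Ioo (0 : ℝ) 1 => powersHom ℝ t :=
      (powersHom ℝ).injective.comp Subtype.val_injective
    exact (linearIndependent_monoidHom (Multiplicative ℕ) ℝ).comp _ hinj
  have hcomp : ⇑(LinearMap.pi fun n => (φ n : F →ₗ[ℝ] ℝ)) ∘ w =
      fun (t : Set.Ioo (0 : ℝ) 1) (n : ℕ) => (t : ℝ) ^ n := by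
    ext t n
    simp [w, (φ n).map_tsum (hsum t), hφ]
  have hw : LinearIndependent ℝ w := .of_comp _ (hcomp ▸ hgeom)
  simpa [mk_Ioo_real zero_lt_one] using hw.cardinal_lift_le_rank

namespace lp

variable {α : Type*} (𝕜 : Type*) [NontriviallyNormedField 𝕜] (ι : Type*) [Fintype ι]
  (p : ℝ≥0∞) [Fact (1 ≤ p)]

noncomputable def diagonalCoordForm (k : α) :
    ContinuousMultilinearMap 𝕜 (fun _ : ι => lp (fun _ : α => 𝕜) p) 𝕜 :=
  (ContinuousMultilinearMap.mkPiAlgebra 𝕜 ι 𝕜).compContinuousLinearMap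
    fun _ => lp.evalCLM 𝕜 (fun _ : α => 𝕜) p k

theorem norm_diagonalCoordForm_le (k : α) : ‖diagonalCoordForm 𝕜 ι p k‖ ≤ 1 := by
  refine ContinuousMultilinearMap.opNorm_le_bound zero_le_one fun x => ?_
  simp only [diagonalCoordForm, ContinuousMultilinearMap.compContinuousLinearMap_apply,
    ContinuousMultilinearMap.mkPiAlgebra_apply, norm_prod, one_mul]
  exact Finset.prod_le_prod (fun _ _ => norm_nonneg _) fun i _ =>
    lp.norm_apply_le_norm (zero_lt_one.trans_le Fact.out).ne' (x i) k

theorem diagonalCoordForm_apply_single [Nonempty ι] [DecidableEq α] (n k : α) :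
    diagonalCoordForm 𝕜 ι p k (fun _ => lp.single p n 1) = if k = n then 1 else 0 := by
  simp [diagonalCoordForm, lp.evalCLM, lp.single_apply, Pi.single_apply]

end lp

theorem continuum_le_rank_continuousMultilinearMap_lp (ι : Type*) [Fintype ι] [Nonempty ι]
    (p : ℝ≥0∞) [Fact (1 ≤ p)] :
    𝔠 ≤ Module.rank ℝ (ContinuousMultilinearMap ℝ (fun _ : ι => lp (fun _ : ℕ => ℝ) p) ℝ) :=
  continuum_le_rank_of_biorthogonal _ (lp.norm_diagonalCoordForm_le ℝ ι p)
    (fun n => ContinuousMultilinearMap.apply ℝ _ ℝ fun _ => lp.single p n 1)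
    (lp.diagonalCoordForm_apply_single ℝ ι p)

/-- Every Hamel basis of the Banach space `𝓛(^m ℓ_p; ℝ)` of continuous
`m`-linear forms on `ℓ_p × ⋯ × ℓ_p` (`1 ≤ p < ∞`, `m ≥ 1`) has cardinality
exactly `𝔠`, the cardinality of the continuum; equivalently, its Hamel
dimension (linear rank) equals `𝔠`. -/
theorem stmt15 (m : ℕ) (hm : 1 ≤ m) (p : ℝ≥0∞) [Fact (1 ≤ p)] (hp : p ≠ ⊤) :
    Module.rank ℝ
      (ContinuousMultilinearMap ℝ (fun _ : Fin m => lp (fun _ : ℕ => ℝ) p) ℝ) =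
      Cardinal.continuum ∧
    ∀ (ι : Type) (_ : Module.Basis ι ℝ
      (ContinuousMultilinearMap ℝ (fun _ : Fin m => lp (fun _ : ℕ => ℝ) p) ℝ)),
      Cardinal.mk ι = Cardinal.continuum := by
  have : Nonempty (Fin m) := ⟨⟨0, hm⟩⟩
  have : SeparableSpace (lp (fun _ : ℕ => ℝ) p) := lp.separableSpace hp
  have hrank : Module.rank ℝ
      (ContinuousMultilinearMap ℝ (fun _ : Fin m => lp (fun _ : ℕ => ℝ) p) ℝ) = 𝔠 :=
    rank_continuousMultilinearMap_le_continuum.antisymm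
      (continuum_le_rank_continuousMultilinearMap_lp (Fin m) p)
  exact ⟨hrank, fun ι b => b.mk_eq_rank''.trans hrank⟩
end
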